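/- arXiv:1712.06201 — 2 statements merged into one kernel-verified Lean document; each statement's English description precedes it below -/
import Mathlib

section
/- Fix 0 < α < 1 and δ > 0. Let (U_i)_{i≥1} be i.i.d. positive random variables with P(U_1 ≤ u) = 1 − exp(−δ u^α / α) for u ≥ 0, set τ_j = U_1 + ⋯ + U_j, and let n_t = #{j ≥ 1 : τ_j ≤ t} be the number of renewal events in [0, t]. Then for every c < 1 and every t > 0 there exists a constant C < ∞ such that P(n_t ≥ j) ≤ C · j^{−c α j} for every integer j ≥ 1. -/
lemma exp_poly_bound (B β : ℝ) (hB : 1 ≤ B) (hβ : 0 < β) (j : ℕ) (hj : 1 ≤ j) :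
    (B * (j:ℝ) ^ (-β)) ^ j ≤ Real.exp (β * B ^ (1/β)) := by
  have hj1 : (1:ℝ) ≤ (j:ℝ) := by exact_mod_cast hj
  have hj0 : (0:ℝ) < (j:ℝ) := by linarith
  have hB0 : (0:ℝ) < B := by linarith
  set y := B * (j:ℝ) ^ (-β) with hy
  have hy0 : 0 < y := mul_pos hB0 (Real.rpow_pos_of_pos hj0 _)
  have hBpow : (0:ℝ) < B ^ (1/β) := Real.rpow_pos_of_pos hB0 _
  have hlog : (j:ℝ) * Real.log y ≤ β * B ^ (1/β) := by
    have h1 : Real.log y = Real.log B - β * Real.log (j:ℝ) := by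
      rw [hy, Real.log_mul (ne_of_gt hB0) (ne_of_gt (Real.rpow_pos_of_pos hj0 _)),
        Real.log_rpow hj0]
      ring
    have h2 : Real.log (B ^ (1/β) / (j:ℝ)) ≤ B ^ (1/β) / (j:ℝ) - 1 :=
      Real.log_le_sub_one_of_pos (div_pos hBpow hj0)
    have h3 : Real.log (B ^ (1/β) / (j:ℝ)) = (1/β) * Real.log B - Real.log (j:ℝ) := by
      rw [Real.log_div (ne_of_gt hBpow) (ne_of_gt hj0), Real.log_rpow hB0]
    have h4 : (j:ℝ) * Real.log y = β * ((j:ℝ) * Real.log (B ^ (1/β) / (j:ℝ))) := by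
      rw [h1, h3]
      field_simp
    have h5 : (j:ℝ) * Real.log (B ^ (1/β) / (j:ℝ)) ≤ B ^ (1/β) - (j:ℝ) := by
      have := mul_le_mul_of_nonneg_left h2 (le_of_lt hj0)
      have heq : (j:ℝ) * (B ^ (1/β) / (j:ℝ) - 1) = B ^ (1/β) - (j:ℝ) := by
        field_simp
      linarith [heq ▸ this]
    rw [h4]
    calc β * ((j:ℝ) * Real.log (B ^ (1/β) / (j:ℝ))) ≤ β * (B ^ (1/β) - (j:ℝ)) :=
          mul_le_mul_of_nonneg_left h5 (le_of_lt hβ)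
      _ ≤ β * B ^ (1/β) := by nlinarith
  calc y ^ j = Real.exp (Real.log y) ^ j := by rw [Real.exp_log hy0]
    _ = Real.exp ((j:ℝ) * Real.log y) := by rw [← Real.exp_nat_mul]
    _ ≤ Real.exp (β * B ^ (1/β)) := Real.exp_le_exp.mpr hlog


open MeasureTheory ProbabilityTheory

/-- Tail bound for the number of events of the renewal process with intensity
`λ(u) = δ u^{α−1}` used by the CIS algorithm (Lemma 6.2 of the paper):
`P(n_t ≥ j) ≤ C j^{−cαj}`. -/
theorem renewal_count_tail_bound
    {Ω : Type*} [MeasurableSpace Ω] (μ : Measure Ω) [IsProbabilityMeasure μ]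
    (α δ : ℝ) (hα0 : 0 < α) (hα1 : α < 1) (hδ : 0 < δ)
    (U : ℕ → Ω → ℝ) (hUmeas : ∀ i, Measurable (U i))
    (hUpos : ∀ i, ∀ᵐ ω ∂μ, 0 < U i ω)
    (hUindep : iIndepFun U μ)
    (hUcdf : ∀ i, ∀ u : ℝ, 0 ≤ u →
      μ {ω | U i ω ≤ u} = ENNReal.ofReal (1 - Real.exp (-δ * u ^ α / α)))
    (n : ℝ → Ω → ℕ)
    (hn : ∀ t ω, n t ω =
      Set.ncard {j : ℕ | 1 ≤ j ∧ ∑ i ∈ Finset.range j, U i ω ≤ t}) :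
    ∀ c : ℝ, c < 1 → ∀ t : ℝ, 0 < t → ∃ C : ℝ,
      ∀ j : ℕ, 1 ≤ j →
        μ {ω | j ≤ n t ω} ≤ ENNReal.ofReal (C * (j : ℝ) ^ (-(c * α * (j : ℝ)))) := by
  classical
  intro c hc t ht
  have hpos_ae : ∀ᵐ ω ∂μ, ∀ i, 0 < U i ω := ae_all_iff.mpr hUpos
  rcases le_or_gt c 0 with hc0 | hc0
  · -- trivial case c ≤ 0
    refine ⟨1, fun j hj => ?_⟩
    have hj1 : (1:ℝ) ≤ (j:ℝ) := by exact_mod_cast hj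
    have hexp : 0 ≤ -(c * α * (j:ℝ)) := by
      have h := mul_nonneg (mul_nonneg (neg_nonneg.mpr hc0) hα0.le)
        (by positivity : (0:ℝ) ≤ (j:ℝ))
      nlinarith
    have h1 : (1:ℝ) ≤ (j:ℝ) ^ (-(c * α * (j:ℝ))) := Real.one_le_rpow hj1 hexp
    calc μ {ω | j ≤ n t ω} ≤ 1 := prob_le_one
      _ = ENNReal.ofReal 1 := ENNReal.ofReal_one.symm
      _ ≤ ENNReal.ofReal (1 * (j:ℝ) ^ (-(c * α * (j:ℝ)))) := by
          rw [one_mul]; exact ENNReal.ofReal_le_ofReal h1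
  · -- main case 0 < c < 1
    set ε : ℝ := (1 - c) / 2 with hεdef
    have hε0 : 0 < ε := by rw [hεdef]; linarith
    have hεlt : ε + c < 1 := by rw [hεdef]; linarith
    have hεα : (0:ℝ) < ε ^ α := Real.rpow_pos_of_pos hε0 _
    have htα : (0:ℝ) < t ^ α := Real.rpow_pos_of_pos ht _
    set K : ℝ := δ * t ^ α / (α * ε ^ α) with hKdef
    have hK0 : 0 < K := by positivity
    set B : ℝ := 2 * max 1 K with hBdef
    have hM1 : (1:ℝ) ≤ max 1 K := le_max_left 1 K
    have hB1 : (1:ℝ) ≤ B := by rw [hBdef]; nlinarith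
    set β : ℝ := α * (1 - ε - c) with hβdef
    have hβ0 : 0 < β := by rw [hβdef]; nlinarith
    refine ⟨Real.exp (β * B ^ (1/β)), fun j hj => ?_⟩
    have hj1 : (1:ℝ) ≤ (j:ℝ) := by exact_mod_cast hj
    have hj0 : (0:ℝ) < (j:ℝ) := by linarith
    set a : ℝ := t / (ε * (j:ℝ)) with hadef
    have ha0 : 0 < a := by positivity
    have hflle : Nat.floor (ε * (j:ℝ)) ≤ j := by
      have h1 : ε * (j:ℝ) ≤ (j:ℝ) := by nlinarith
      calc Nat.floor (ε * (j:ℝ)) ≤ Nat.floor ((j:ℝ)) := Nat.floor_le_floor h1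
        _ = j := Nat.floor_natCast j
    set m : ℕ := j - Nat.floor (ε * (j:ℝ)) with hmdef
    have hmj : m ≤ j := Nat.sub_le _ _
    have hm_lb : (1 - ε) * (j:ℝ) ≤ (m:ℝ) := by
      have h1 : (Nat.floor (ε * (j:ℝ)) : ℝ) ≤ ε * (j:ℝ) := Nat.floor_le (by positivity)
      have h2 : (m:ℝ) = (j:ℝ) - (Nat.floor (ε * (j:ℝ)) : ℝ) := by
        rw [hmdef, Nat.cast_sub hflle]
      rw [h2]; linarith
    -- the union event
    have hsub : {ω | j ≤ n t ω} ∩ {ω | ∀ i, 0 < U i ω} ⊆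
        ⋃ S ∈ Finset.powersetCard m (Finset.range j), ⋂ i ∈ S, {ω | U i ω ≤ a} := by
      rintro ω ⟨hωn, hωpos⟩
      simp only [Set.mem_setOf_eq] at hωn hωpos
      -- step 1: the j-th partial sum is ≤ t
      have hτ : ∑ i ∈ Finset.range j, U i ω ≤ t := by
        rw [hn t ω] at hωn
        set S := {j' : ℕ | 1 ≤ j' ∧ ∑ i ∈ Finset.range j', U i ω ≤ t} with hSdef
        have hex : ∃ k ∈ S, j ≤ k := by
          by_contra hcon
          push_neg at hcon
          have hSsub : S ⊆ Set.Ico 1 j := fun k hk => ⟨hk.1, hcon k hk⟩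
          have h1 : S.ncard ≤ (Set.Ico 1 j).ncard :=
            Set.ncard_le_ncard hSsub (Set.finite_Ico 1 j)
          have h2 : (Set.Ico 1 j).ncard = j - 1 := by
            rw [← Finset.coe_Ico, Set.ncard_coe_finset, Nat.card_Ico]
          omega
        obtain ⟨k, hkS, hjk⟩ := hex
        calc ∑ i ∈ Finset.range j, U i ω ≤ ∑ i ∈ Finset.range k, U i ω :=
              Finset.sum_le_sum_of_subset_of_nonneg (Finset.range_subset_range.mpr hjk)
                (fun i _ _ => (hωpos i).le)
          _ ≤ t := hkS.2
      -- step 2: pigeonhole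
      set bad := (Finset.range j).filter (fun i => ¬ U i ω ≤ a) with hbaddef
      have hbadsum : (bad.card : ℝ) * a ≤ t := by
        have h1 : bad.card • a ≤ ∑ i ∈ bad, U i ω :=
          Finset.card_nsmul_le_sum bad _ a
            (fun i hi => le_of_lt (lt_of_not_ge (Finset.mem_filter.mp hi).2))
        have h2 : ∑ i ∈ bad, U i ω ≤ ∑ i ∈ Finset.range j, U i ω :=
          Finset.sum_le_sum_of_subset_of_nonneg (Finset.filter_subset _ _)
            (fun i _ _ => (hωpos i).le)
        rw [nsmul_eq_mul] at h1
        linarith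
      have hbadcard : bad.card ≤ Nat.floor (ε * (j:ℝ)) := by
        apply Nat.le_floor
        have h1 : (bad.card : ℝ) ≤ t / a := by
          rw [le_div_iff₀ ha0]; exact hbadsum
        have h2 : t / a = ε * (j:ℝ) := by
          rw [hadef]
          field_simp
        linarith [h2 ▸ h1]
      set good := (Finset.range j).filter (fun i => U i ω ≤ a) with hgooddef
      have hsplit : good.card + bad.card = j := by
        rw [hgooddef, hbaddef, Finset.card_filter_add_card_filter_not,
          Finset.card_range]
      have hgood : m ≤ good.card := by omega
      obtain ⟨S, hSsub, hScard⟩ := Finset.exists_subset_card_eq hgood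
      simp only [Set.mem_iUnion, Set.mem_iInter, Set.mem_setOf_eq]
      exact ⟨S, Finset.mem_powersetCard.mpr
          ⟨hSsub.trans (Finset.filter_subset _ _), hScard⟩,
        fun i hi => (Finset.mem_filter.mp (hSsub hi)).2⟩
    -- measure chain
    have hq : μ {ω | U 0 ω ≤ a} = ENNReal.ofReal (1 - Real.exp (-δ * a ^ α / α)) :=
      hUcdf 0 a ha0.le
    set p : ℝ := K * (j:ℝ) ^ (-α) with hpdef
    have hp0 : 0 ≤ p := by positivity
    have hqp : ∀ i : ℕ, μ {ω | U i ω ≤ a} ≤ ENNReal.ofReal p := by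
      intro i
      rw [hUcdf i a ha0.le]
      apply ENNReal.ofReal_le_ofReal
      have hx0 : 0 ≤ δ * a ^ α / α := by positivity
      have hexp : 1 - δ * a ^ α / α ≤ Real.exp (-(δ * a ^ α / α)) := by
        linarith [Real.add_one_le_exp (-(δ * a ^ α / α))]
      have h1 : 1 - Real.exp (-δ * a ^ α / α) ≤ δ * a ^ α / α := by
        have : -δ * a ^ α / α = -(δ * a ^ α / α) := by ring
        rw [this]; linarith
      refine h1.trans (le_of_eq ?_)
      -- δ a^α / α = K j^{-α}
      rw [hpdef, hKdef, hadef, Real.div_rpow ht.le (by positivity),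
        Real.mul_rpow hε0.le hj0.le, Real.rpow_neg hj0.le]
      have hjα : (0:ℝ) < (j:ℝ) ^ α := Real.rpow_pos_of_pos hj0 _
      field_simp
    have hterm : ∀ S ∈ Finset.powersetCard m (Finset.range j),
        μ (⋂ i ∈ S, {ω | U i ω ≤ a}) ≤ ENNReal.ofReal (p ^ m) := by
      intro S hS
      have hScard : S.card = m := (Finset.mem_powersetCard.mp hS).2
      have hmeas : ∀ i ∈ S,
          MeasurableSet[(inferInstance : MeasurableSpace ℝ).comap (U i)]
            {ω | U i ω ≤ a} :=
        fun i _ => ⟨Set.Iic a, measurableSet_Iic, rfl⟩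
      rw [hUindep.meas_biInter hmeas, ENNReal.ofReal_pow hp0, ← hScard]
      calc ∏ i ∈ S, μ {ω | U i ω ≤ a} ≤ ∏ _i ∈ S, ENNReal.ofReal p :=
            Finset.prod_le_prod' (fun i _ => hqp i)
        _ = ENNReal.ofReal p ^ S.card := Finset.prod_const _
    have hchain : μ {ω | j ≤ n t ω} ≤
        ENNReal.ofReal ((Nat.choose j m : ℝ) * p ^ m) := by
      calc μ {ω | j ≤ n t ω}
          = μ ({ω | j ≤ n t ω} ∩ {ω | ∀ i, 0 < U i ω}) := by
            refine (measure_inter_conull ?_).symm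
            have := hpos_ae
            rw [Filter.eventually_iff, mem_ae_iff] at this
            simpa [Set.compl_setOf] using this
        _ ≤ μ (⋃ S ∈ Finset.powersetCard m (Finset.range j), ⋂ i ∈ S, {ω | U i ω ≤ a}) :=
            measure_mono hsub
        _ ≤ ∑ S ∈ Finset.powersetCard m (Finset.range j), μ (⋂ i ∈ S, {ω | U i ω ≤ a}) :=
            measure_biUnion_finset_le _ _
        _ ≤ ∑ _S ∈ Finset.powersetCard m (Finset.range j), ENNReal.ofReal (p ^ m) :=
            Finset.sum_le_sum hterm
        _ = (Finset.powersetCard m (Finset.range j)).card • ENNReal.ofReal (p ^ m) := by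
            rw [Finset.sum_const]
        _ = ENNReal.ofReal ((Nat.choose j m : ℝ) * p ^ m) := by
            rw [Finset.card_powersetCard, Finset.card_range, nsmul_eq_mul,
              ENNReal.ofReal_mul (by positivity), ENNReal.ofReal_natCast]
    refine hchain.trans (ENNReal.ofReal_le_ofReal ?_)
    -- final real inequality
    have hchoose : (Nat.choose j m : ℝ) ≤ 2 ^ j := by
      have h1 : Nat.choose j m ≤ 2 ^ j := by
        have h2 : Nat.choose j m ≤ ∑ k ∈ Finset.range (j+1), Nat.choose j k :=
          Finset.single_le_sum (f := fun k => Nat.choose j k) (fun k _ => Nat.zero_le _)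
            (Finset.mem_range.mpr (Nat.lt_succ_of_le hmj))
        rw [Nat.sum_range_choose] at h2
        exact h2
      exact_mod_cast h1
    have hpm : p ^ m = K ^ m * (j:ℝ) ^ (-(α * m)) := by
      rw [hpdef, mul_pow, ← Real.rpow_natCast ((j:ℝ) ^ (-α)) m,
        ← Real.rpow_mul hj0.le]
      ring_nf
    have hKm : K ^ m ≤ (max 1 K) ^ j := by
      calc K ^ m ≤ (max 1 K) ^ m := pow_le_pow_left₀ hK0.le (le_max_right 1 K) m
        _ ≤ (max 1 K) ^ j := pow_le_pow_right₀ hM1 hmj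
    have hjm : (j:ℝ) ^ (-(α * m)) ≤ (j:ℝ) ^ (-(α * ((1 - ε) * j))) := by
      apply Real.rpow_le_rpow_of_exponent_le hj1
      have : α * ((1 - ε) * (j:ℝ)) ≤ α * m := by nlinarith
      linarith
    have hsplitexp : (j:ℝ) ^ (-(α * ((1 - ε) * (j:ℝ)))) =
        (j:ℝ) ^ (-(β * (j:ℝ))) * (j:ℝ) ^ (-(c * α * (j:ℝ))) := by
      rw [← Real.rpow_add hj0]
      congr 1
      rw [hβdef]; ring
    have hBj : (2:ℝ) ^ j * (max 1 K) ^ j * (j:ℝ) ^ (-(β * (j:ℝ))) ≤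
        Real.exp (β * B ^ (1/β)) := by
      have h1 : (j:ℝ) ^ (-(β * (j:ℝ))) = ((j:ℝ) ^ (-β)) ^ j := by
        rw [← Real.rpow_natCast ((j:ℝ) ^ (-β)) j, ← Real.rpow_mul hj0.le]
        ring_nf
      rw [h1, ← mul_pow, ← mul_pow]
      exact exp_poly_bound B β hB1 hβ0 j hj
    have hrpos : (0:ℝ) ≤ (j:ℝ) ^ (-(c * α * (j:ℝ))) :=
      (Real.rpow_pos_of_pos hj0 _).le
    calc (Nat.choose j m : ℝ) * p ^ m
        ≤ 2 ^ j * (K ^ m * (j:ℝ) ^ (-(α * m))) := by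
          rw [← hpm]
          exact mul_le_mul_of_nonneg_right hchoose (by positivity)
      _ ≤ 2 ^ j * ((max 1 K) ^ j * (j:ℝ) ^ (-(α * ((1 - ε) * (j:ℝ))))) := by
          apply mul_le_mul_of_nonneg_left _ (by positivity)
          exact mul_le_mul hKm hjm (Real.rpow_pos_of_pos hj0 _).le (by positivity)
      _ = (2 ^ j * (max 1 K) ^ j * (j:ℝ) ^ (-(β * (j:ℝ)))) * (j:ℝ) ^ (-(c * α * (j:ℝ))) := by
          rw [hsplitexp]; ring
      _ ≤ Real.exp (β * B ^ (1/β)) * (j:ℝ) ^ (-(c * α * (j:ℝ))) :=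
          mul_le_mul_of_nonneg_right hBj hrpos
end

section
/- Suppose conditions (ii), (v) and (vi) hold. Then there exists a constant C < ∞ such that for all x, z ∈ ℝ^d and all u > 0, setting y = x + u b(x) + √u σ(x) z, one has | tr( (γ(y) − γ(x)) · σ(x)^{−T}(z zᵀ − I) σ(x)^{−1} ) | ≤ C ( u^{κ_γ/2} ‖z‖^{κ_γ} + u^{κ_γ} + u^{m/2} ‖z‖^{m} + u^{m} ) · ‖z zᵀ − I‖, where I is the d×d identity matrix. -/
open Matrix Real

/-- Frobenius norm of a `d × d` real matrix. -/
noncomputable def fnorm {d : ℕ} (A : Matrix (Fin d) (Fin d) ℝ) : ℝ :=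
  Real.sqrt (∑ i, ∑ j, (A i j) ^ 2)

/-- Euclidean norm of a vector in `ℝ^d`. -/
noncomputable def vnorm {d : ℕ} (v : Fin d → ℝ) : ℝ :=
  Real.sqrt (∑ i, (v i) ^ 2)

section helpers

variable {d : ℕ}

lemma vnorm_nonneg (v : Fin d → ℝ) : 0 ≤ vnorm v := Real.sqrt_nonneg _

lemma fnorm_nonneg (A : Matrix (Fin d) (Fin d) ℝ) : 0 ≤ fnorm A := Real.sqrt_nonneg _

lemma vnorm_sq (v : Fin d → ℝ) : vnorm v ^ 2 = ∑ i, (v i) ^ 2 := by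
  rw [vnorm, Real.sq_sqrt]; positivity

lemma vnorm_eq_norm (v : Fin d → ℝ) :
    vnorm v = ‖(WithLp.equiv 2 (Fin d → ℝ)).symm v‖ := by
  rw [EuclideanSpace.norm_eq]
  simp [vnorm, Real.norm_eq_abs, sq_abs]

lemma vnorm_add_le (v w : Fin d → ℝ) : vnorm (v + w) ≤ vnorm v + vnorm w := by
  simp only [vnorm_eq_norm]
  rw [show (WithLp.equiv 2 (Fin d → ℝ)).symm (v + w) =
      (WithLp.equiv 2 (Fin d → ℝ)).symm v + (WithLp.equiv 2 (Fin d → ℝ)).symm w from rfl]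
  exact norm_add_le _ _

lemma vnorm_smul (s : ℝ) (v : Fin d → ℝ) : vnorm (s • v) = |s| * vnorm v := by
  simp only [vnorm_eq_norm]
  rw [show (WithLp.equiv 2 (Fin d → ℝ)).symm (s • v) =
      s • (WithLp.equiv 2 (Fin d → ℝ)).symm v from rfl]
  rw [norm_smul, Real.norm_eq_abs]

/-- Cauchy–Schwarz for the trace of a product. -/
lemma abs_trace_mul_le (A B : Matrix (Fin d) (Fin d) ℝ) :
    |Matrix.trace (A * B)| ≤ fnorm A * fnorm B := by
  have h1 : Matrix.trace (A * B) = ∑ p : Fin d × Fin d, A p.1 p.2 * B p.2 p.1 := by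
    rw [Matrix.trace]
    simp [Matrix.diag, Matrix.mul_apply, Fintype.sum_prod_type]
  have h2 : |Matrix.trace (A * B)| ≤ ∑ p : Fin d × Fin d, |A p.1 p.2| * |B p.2 p.1| := by
    rw [h1]
    refine (Finset.abs_sum_le_sum_abs _ _).trans ?_
    simp [abs_mul, le_refl]
  refine h2.trans ?_
  have h3 := Real.sum_mul_le_sqrt_mul_sqrt Finset.univ
    (fun p : Fin d × Fin d => |A p.1 p.2|) (fun p => |B p.2 p.1|)
  refine h3.trans_eq ?_
  have hA : √(∑ p : Fin d × Fin d, |A p.1 p.2| ^ 2) = fnorm A := by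
    rw [fnorm]; congr 1
    rw [Fintype.sum_prod_type]
    simp [sq_abs]
  have hB : √(∑ p : Fin d × Fin d, |B p.2 p.1| ^ 2) = fnorm B := by
    rw [fnorm]; congr 1
    rw [Fintype.sum_prod_type, Finset.sum_comm]
    simp [sq_abs]
  rw [hA, hB]

/-- If `P` contracts vectors by factor `t`, then `fnorm (P * N) ≤ t * fnorm N`. -/
lemma fnorm_mul_le_of_mulVec {P N : Matrix (Fin d) (Fin d) ℝ} {t : ℝ} (ht : 0 ≤ t)
    (h : ∀ w : Fin d → ℝ, vnorm (P *ᵥ w) ≤ t * vnorm w) :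
    fnorm (P * N) ≤ t * fnorm N := by
  have key : ∑ i, ∑ j, ((P * N) i j) ^ 2 ≤ t ^ 2 * ∑ i, ∑ j, (N i j) ^ 2 := by
    rw [Finset.sum_comm]
    rw [show ∑ i, ∑ j, (N i j)^2 = ∑ j, ∑ i, (N i j)^2 from Finset.sum_comm]
    rw [Finset.mul_sum]
    refine Finset.sum_le_sum fun j _ => ?_
    have hcol : ∀ i, (P * N) i j = (P *ᵥ (fun k => N k j)) i := by
      intro i; simp [Matrix.mul_apply, Matrix.mulVec, dotProduct]
    calc ∑ i, ((P * N) i j) ^ 2 = vnorm (P *ᵥ (fun k => N k j)) ^ 2 := by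
          rw [vnorm_sq]; exact Finset.sum_congr rfl fun i _ => by rw [hcol i]
      _ ≤ (t * vnorm (fun k => N k j)) ^ 2 :=
          pow_le_pow_left₀ (vnorm_nonneg _) (h _) 2
      _ = t ^ 2 * ∑ i, (N i j) ^ 2 := by rw [mul_pow, vnorm_sq]
  calc fnorm (P * N) = √(∑ i, ∑ j, ((P * N) i j) ^ 2) := rfl
    _ ≤ √(t ^ 2 * ∑ i, ∑ j, (N i j) ^ 2) := Real.sqrt_le_sqrt key
    _ = t * fnorm N := by
        rw [Real.sqrt_mul (by positivity), Real.sqrt_sq ht, fnorm]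

lemma real_rpow_add_le {a b p : ℝ} (ha : 0 ≤ a) (hb : 0 ≤ b) (hp : 0 ≤ p) (hp1 : p ≤ 1) :
    (a + b) ^ p ≤ a ^ p + b ^ p := by
  lift a to NNReal using ha
  lift b to NNReal using hb
  have := NNReal.rpow_add_le_add_rpow a b hp hp1
  exact_mod_cast this

end helpers

/-- Pointwise bound on the leading term `D₂` of the copycat CIS incremental weight
(proof of Proposition 6.9, case (a), of the paper). -/
theorem cis_D2_pointwise_bound_gamma
    {d : ℕ} (hd : 1 ≤ d)
    (b : (Fin d → ℝ) → (Fin d → ℝ)) (σ : (Fin d → ℝ) → Matrix (Fin d) (Fin d) ℝ)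
    (γ : (Fin d → ℝ) → Matrix (Fin d) (Fin d) ℝ)
    (hγdef : ∀ x, γ x = σ x * (σ x)ᵀ)
    -- condition (ii)
    (Cb : ℝ) (hcond_ii : ∀ x, vnorm ((σ x)⁻¹ *ᵥ b x) ≤ Cb)
    -- condition (v)
    (c : ℝ) (hc : 0 < c) (hcond_v : ∀ x z, c * (z ⬝ᵥ z) ≤ z ⬝ᵥ (γ x *ᵥ z))
    -- condition (vi)
    (Cγ κγ m : ℝ) (hκγ0 : 0 < κγ) (hκγ1 : κγ ≤ 1) (hm : κγ < m)
    (hcond_vi : ∀ x y, fnorm ((σ x)⁻¹ * (γ y - γ x)) ≤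
      Cγ * (vnorm ((σ x)⁻¹ *ᵥ (y - x)) ^ κγ + vnorm ((σ x)⁻¹ *ᵥ (y - x)) ^ m)) :
    ∃ C : ℝ, ∀ (x z : Fin d → ℝ) (u : ℝ), 0 < u →
      |Matrix.trace
          ((γ (x + u • b x + Real.sqrt u • (σ x *ᵥ z)) - γ x) *
            (((σ x)⁻¹)ᵀ * (vecMulVec z z - 1) * (σ x)⁻¹))| ≤
        C * (u ^ (κγ / 2) * vnorm z ^ κγ + u ^ κγ
            + u ^ (m / 2) * vnorm z ^ m + u ^ m)
          * fnorm (vecMulVec z z - 1) := by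
  have hm0 : 0 < m := hκγ0.trans hm
  have hCb : 0 ≤ Cb := le_trans (vnorm_nonneg _) (hcond_ii 0)
  have hcs : (0:ℝ) < Real.sqrt c := Real.sqrt_pos.2 hc
  -- condition (v) rephrased: ‖σᵀ v‖² ≥ c ‖v‖²
  have hσT : ∀ x (v : Fin d → ℝ), c * (v ⬝ᵥ v) ≤ ((σ x)ᵀ *ᵥ v) ⬝ᵥ ((σ x)ᵀ *ᵥ v) := by
    intro x v
    have h0 := hcond_v x v
    rw [hγdef x] at h0
    calc c * (v ⬝ᵥ v) ≤ v ⬝ᵥ ((σ x * (σ x)ᵀ) *ᵥ v) := h0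
      _ = ((σ x)ᵀ *ᵥ v) ⬝ᵥ ((σ x)ᵀ *ᵥ v) := by
          rw [← Matrix.mulVec_mulVec, Matrix.dotProduct_mulVec, ← Matrix.mulVec_transpose]
  have hdp : ∀ u : Fin d → ℝ, u ⬝ᵥ u = vnorm u ^ 2 := by
    intro u; rw [vnorm_sq]; simp [dotProduct, sq]
  -- σ x is invertible
  have hdet : ∀ x, IsUnit (σ x).det := by
    intro x
    rw [isUnit_iff_ne_zero]
    intro hdx
    have hdx' : ((σ x)ᵀ).det = 0 := by rw [Matrix.det_transpose]; exact hdx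
    obtain ⟨v, hv, hv0⟩ := (Matrix.exists_mulVec_eq_zero_iff).2 hdx'
    have h1 := hσT x v
    rw [hv0] at h1
    simp only [zero_dotProduct] at h1
    have hvv : 0 < v ⬝ᵥ v := by
      obtain ⟨i, hi⟩ : ∃ i, v i ≠ 0 := by
        by_contra h
        push_neg at h
        exact hv (funext fun i => h i)
      rw [show v ⬝ᵥ v = ∑ i, (v i) ^ 2 by simp [dotProduct, sq]]
      exact lt_of_lt_of_le (by positivity)
        (Finset.single_le_sum (f := fun i => (v i) ^ 2)
          (fun j _ => sq_nonneg _) (Finset.mem_univ i))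
    nlinarith
  -- contraction property of (σ x)⁻ᵀ
  have hcontr : ∀ x (w : Fin d → ℝ),
      vnorm (((σ x)⁻¹)ᵀ *ᵥ w) ≤ (Real.sqrt c)⁻¹ * vnorm w := by
    intro x w
    set v := ((σ x)⁻¹)ᵀ *ᵥ w with hv
    have hwv : (σ x)ᵀ *ᵥ v = w := by
      rw [hv, Matrix.mulVec_mulVec, Matrix.transpose_nonsing_inv,
        Matrix.mul_nonsing_inv _ (by rw [Matrix.det_transpose]; exact hdet x),
        Matrix.one_mulVec]
    have h1 : c * vnorm v ^ 2 ≤ vnorm w ^ 2 := by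
      have h2 := hσT x v
      rw [hwv, hdp, hdp] at h2
      exact h2
    have key : (Real.sqrt c * vnorm v) ^ 2 ≤ vnorm w ^ 2 := by
      rw [mul_pow, Real.sq_sqrt hc.le]; exact h1
    have key2 : Real.sqrt c * vnorm v ≤ vnorm w := by
      have h3 := Real.sqrt_le_sqrt key
      rwa [Real.sqrt_sq (mul_nonneg hcs.le (vnorm_nonneg v)), Real.sqrt_sq (vnorm_nonneg w)] at h3
    calc vnorm v = (Real.sqrt c)⁻¹ * (Real.sqrt c * vnorm v) := by
          field_simp
      _ ≤ (Real.sqrt c)⁻¹ * vnorm w :=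
          mul_le_mul_of_nonneg_left key2 (by positivity)
  -- the constant
  refine ⟨max Cγ 0 * (Real.sqrt c)⁻¹
      * (Cb ^ κγ + 1 + (2:ℝ) ^ m * Cb ^ m + (2:ℝ) ^ m), ?_⟩
  intro x z u hu
  set y := x + u • b x + Real.sqrt u • (σ x *ᵥ z) with hy
  set M := γ y - γ x with hM
  set N := vecMulVec z z - 1 with hN
  -- cyclic rearrangement of trace
  have htr : Matrix.trace (M * (((σ x)⁻¹)ᵀ * N * (σ x)⁻¹))
      = Matrix.trace (((σ x)⁻¹ * M) * (((σ x)⁻¹)ᵀ * N)) := by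
    rw [show M * (((σ x)⁻¹)ᵀ * N * (σ x)⁻¹) = (M * (((σ x)⁻¹)ᵀ * N)) * (σ x)⁻¹ from
      (mul_assoc M (((σ x)⁻¹)ᵀ * N) ((σ x)⁻¹)).symm]
    rw [Matrix.trace_mul_comm, mul_assoc]
  have hCS : |Matrix.trace (M * (((σ x)⁻¹)ᵀ * N * (σ x)⁻¹))|
      ≤ fnorm ((σ x)⁻¹ * M) * fnorm (((σ x)⁻¹)ᵀ * N) := by
    rw [htr]; exact abs_trace_mul_le _ _
  have hright : fnorm (((σ x)⁻¹)ᵀ * N) ≤ (Real.sqrt c)⁻¹ * fnorm N :=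
    fnorm_mul_le_of_mulVec (by positivity) (hcontr x)
  -- condition (vi) bound on left factor
  have hyx : (σ x)⁻¹ *ᵥ (y - x) = u • ((σ x)⁻¹ *ᵥ b x) + Real.sqrt u • z := by
    rw [hy]
    rw [show x + u • b x + Real.sqrt u • (σ x *ᵥ z) - x
        = u • b x + Real.sqrt u • (σ x *ᵥ z) by abel]
    rw [Matrix.mulVec_add, Matrix.mulVec_smul, Matrix.mulVec_smul,
      Matrix.mulVec_mulVec, Matrix.nonsing_inv_mul _ (hdet x), Matrix.one_mulVec]
  set w := vnorm ((σ x)⁻¹ *ᵥ (y - x)) with hw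
  have hw0 : 0 ≤ w := vnorm_nonneg _
  set s : ℝ := u * Cb + Real.sqrt u * vnorm z with hs
  have hzn : 0 ≤ vnorm z := vnorm_nonneg z
  have hsu : 0 < Real.sqrt u := Real.sqrt_pos.2 hu
  have hws : w ≤ s := by
    rw [hw, hyx, hs]
    refine (vnorm_add_le _ _).trans ?_
    rw [vnorm_smul, vnorm_smul, abs_of_pos hu, abs_of_pos hsu]
    have := hcond_ii x
    nlinarith [vnorm_nonneg ((σ x)⁻¹ *ᵥ b x)]
  have hs0 : 0 ≤ s := hw0.trans hws
  have hleft : fnorm ((σ x)⁻¹ * M) ≤ max Cγ 0 * (s ^ κγ + s ^ m) := by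
    refine (hcond_vi x y).trans ?_
    rw [← hw]
    have h1 : w ^ κγ ≤ s ^ κγ := Real.rpow_le_rpow hw0 hws hκγ0.le
    have h2 : w ^ m ≤ s ^ m := Real.rpow_le_rpow hw0 hws hm0.le
    calc Cγ * (w ^ κγ + w ^ m) ≤ max Cγ 0 * (w ^ κγ + w ^ m) := by
          apply mul_le_mul_of_nonneg_right (le_max_left _ _)
          positivity
      _ ≤ max Cγ 0 * (s ^ κγ + s ^ m) := by
          apply mul_le_mul_of_nonneg_left (by linarith) (le_max_right _ _)
  -- expand powers of s
  set T : ℝ := u ^ (κγ / 2) * vnorm z ^ κγ + u ^ κγ + u ^ (m / 2) * vnorm z ^ m + u ^ m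
    with hT
  have hsqrtu_rpow : ∀ p : ℝ, Real.sqrt u ^ p = u ^ (p / 2) := by
    intro p
    rw [Real.sqrt_eq_rpow, ← Real.rpow_mul hu.le]
    congr 1
    ring
  have ha : (u * Cb) ^ κγ = u ^ κγ * Cb ^ κγ := Real.mul_rpow hu.le hCb
  have hb' : (Real.sqrt u * vnorm z) ^ κγ = u ^ (κγ / 2) * vnorm z ^ κγ := by
    rw [Real.mul_rpow hsu.le hzn, hsqrtu_rpow]
  have ham : (u * Cb) ^ m = u ^ m * Cb ^ m := Real.mul_rpow hu.le hCb
  have hbm : (Real.sqrt u * vnorm z) ^ m = u ^ (m / 2) * vnorm z ^ m := by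
    rw [Real.mul_rpow hsu.le hzn, hsqrtu_rpow]
  have hsκ : s ^ κγ ≤ u ^ κγ * Cb ^ κγ + u ^ (κγ / 2) * vnorm z ^ κγ := by
    rw [← ha, ← hb']
    exact real_rpow_add_le (by positivity) (by positivity) hκγ0.le hκγ1
  have hsm : s ^ m ≤ (2:ℝ) ^ m * (u ^ m * Cb ^ m) + (2:ℝ) ^ m * (u ^ (m / 2) * vnorm z ^ m) := by
    have h2max : s ≤ 2 * max (u * Cb) (Real.sqrt u * vnorm z) := by
      rw [hs]
      have h1 := le_max_left (u * Cb) (Real.sqrt u * vnorm z)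
      have h2 := le_max_right (u * Cb) (Real.sqrt u * vnorm z)
      linarith
    have hmax0 : 0 ≤ max (u * Cb) (Real.sqrt u * vnorm z) :=
      le_trans (by positivity) (le_max_left _ _)
    have h3 : s ^ m ≤ (2 * max (u * Cb) (Real.sqrt u * vnorm z)) ^ m :=
      Real.rpow_le_rpow hs0 h2max hm0.le
    have h4 : (2 * max (u * Cb) (Real.sqrt u * vnorm z)) ^ m
        = (2:ℝ) ^ m * (max (u * Cb) (Real.sqrt u * vnorm z)) ^ m :=
      Real.mul_rpow (by norm_num) hmax0
    have h5 : (max (u * Cb) (Real.sqrt u * vnorm z)) ^ m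
        ≤ (u * Cb) ^ m + (Real.sqrt u * vnorm z) ^ m := by
      rcases le_total (u * Cb) (Real.sqrt u * vnorm z) with hle | hle
      · rw [max_eq_right hle]
        have : (0:ℝ) ≤ (u * Cb) ^ m := Real.rpow_nonneg (by positivity) m
        linarith
      · rw [max_eq_left hle]
        have : (0:ℝ) ≤ (Real.sqrt u * vnorm z) ^ m := Real.rpow_nonneg (by positivity) m
        linarith
    calc s ^ m ≤ (2:ℝ) ^ m * (max (u * Cb) (Real.sqrt u * vnorm z)) ^ m := by
          rw [← h4]; exact h3
      _ ≤ (2:ℝ) ^ m * ((u * Cb) ^ m + (Real.sqrt u * vnorm z) ^ m) := by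
          apply mul_le_mul_of_nonneg_left h5 (Real.rpow_nonneg (by norm_num) m)
      _ = (2:ℝ) ^ m * (u ^ m * Cb ^ m) + (2:ℝ) ^ m * (u ^ (m / 2) * vnorm z ^ m) := by
          rw [ham, hbm]; ring
  -- combine into K * T
  have hK : s ^ κγ + s ^ m
      ≤ (Cb ^ κγ + 1 + (2:ℝ) ^ m * Cb ^ m + (2:ℝ) ^ m) * T := by
    have t1 : (0:ℝ) ≤ u ^ (κγ / 2) * vnorm z ^ κγ := by positivity
    have t2 : (0:ℝ) ≤ u ^ κγ := by positivity
    have t3 : (0:ℝ) ≤ u ^ (m / 2) * vnorm z ^ m := by positivity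
    have t4 : (0:ℝ) ≤ u ^ m := by positivity
    have c1 : (0:ℝ) ≤ Cb ^ κγ := by positivity
    have c3 : (0:ℝ) ≤ (2:ℝ) ^ m * Cb ^ m := by positivity
    have c4 : (0:ℝ) ≤ (2:ℝ) ^ m := by positivity
    have m1 : u ^ κγ ≤ T := by rw [hT]; linarith
    have m2 : u ^ (κγ / 2) * vnorm z ^ κγ ≤ T := by rw [hT]; linarith
    have m3 : u ^ m ≤ T := by rw [hT]; linarith
    have m4 : u ^ (m / 2) * vnorm z ^ m ≤ T := by rw [hT]; linarith
    have e1 : u ^ κγ * Cb ^ κγ ≤ Cb ^ κγ * T := by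
      rw [mul_comm]; exact mul_le_mul_of_nonneg_left m1 c1
    have e2 : u ^ (κγ / 2) * vnorm z ^ κγ ≤ 1 * T := by rw [one_mul]; exact m2
    have e3 : (2:ℝ) ^ m * (u ^ m * Cb ^ m) ≤ ((2:ℝ) ^ m * Cb ^ m) * T := by
      rw [show (2:ℝ) ^ m * (u ^ m * Cb ^ m) = ((2:ℝ) ^ m * Cb ^ m) * u ^ m by ring]
      exact mul_le_mul_of_nonneg_left m3 c3
    have e4 : (2:ℝ) ^ m * (u ^ (m / 2) * vnorm z ^ m) ≤ (2:ℝ) ^ m * T :=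
      mul_le_mul_of_nonneg_left m4 c4
    calc s ^ κγ + s ^ m
        ≤ (u ^ κγ * Cb ^ κγ + u ^ (κγ / 2) * vnorm z ^ κγ)
          + ((2:ℝ) ^ m * (u ^ m * Cb ^ m) + (2:ℝ) ^ m * (u ^ (m / 2) * vnorm z ^ m)) :=
          add_le_add hsκ hsm
      _ ≤ (Cb ^ κγ * T + 1 * T) + (((2:ℝ) ^ m * Cb ^ m) * T + (2:ℝ) ^ m * T) :=
          add_le_add (add_le_add e1 e2) (add_le_add e3 e4)
      _ = (Cb ^ κγ + 1 + (2:ℝ) ^ m * Cb ^ m + (2:ℝ) ^ m) * T := by ring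
  -- final assembly
  have hT0 : 0 ≤ T := by rw [hT]; positivity
  have hmax0' : 0 ≤ max Cγ 0 := le_max_right _ _
  have hfin : |Matrix.trace (M * (((σ x)⁻¹)ᵀ * N * (σ x)⁻¹))|
      ≤ (max Cγ 0 * (s ^ κγ + s ^ m)) * ((Real.sqrt c)⁻¹ * fnorm N) := by
    refine hCS.trans ?_
    apply mul_le_mul hleft hright (fnorm_nonneg _)
    have : (0:ℝ) ≤ s ^ κγ + s ^ m := by positivity
    positivity
  refine hfin.trans ?_
  have step : max Cγ 0 * (s ^ κγ + s ^ m)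
      ≤ max Cγ 0 * ((Cb ^ κγ + 1 + (2:ℝ) ^ m * Cb ^ m + (2:ℝ) ^ m) * T) :=
    mul_le_mul_of_nonneg_left hK hmax0'
  calc (max Cγ 0 * (s ^ κγ + s ^ m)) * ((Real.sqrt c)⁻¹ * fnorm N)
      ≤ (max Cγ 0 * ((Cb ^ κγ + 1 + (2:ℝ) ^ m * Cb ^ m + (2:ℝ) ^ m) * T))
        * ((Real.sqrt c)⁻¹ * fnorm N) := by
        apply mul_le_mul_of_nonneg_right step
        have := fnorm_nonneg N
        positivity
    _ = max Cγ 0 * (Real.sqrt c)⁻¹ * (Cb ^ κγ + 1 + (2:ℝ) ^ m * Cb ^ m + (2:ℝ) ^ m)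
        * T * fnorm N := by ring
end
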